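/- Let (X, d) be a metric space and φ : ℝ × X → X a flow (φ_0 = id, φ_{t+s} = φ_t ∘ φ_s) such that for each r ∈ ℝ the map φ_r is Lipschitz. Fix t, s ∈ ℝ and let C ≥ 1 be a common Lipschitz constant for all φ_r with |r| ≤ |t| + |s|. Let Σ₁, Σ₂ ⊆ X, t₀ > 0, T > t₀ + |t| + |s|, and R > 0. For subsets A, B ⊆ X define L^{R}_{A,B}(a, b) := { ρ ∈ A : ∃ q ∈ B(ρ, R), ∃ r with a ≤ |r| ≤ b, d(φ_r(q), B) < R }. Suppose ρ ∈ φ_t(Σ₁) and d(ρ, L^{R}_{φ_t(Σ₁), φ_s(Σ₂)}(t₀ + |t| + |s|, T - |t| - |s|)) < R. Then φ_{-t}(ρ) ∈ Σ₁ and d(φ_{-t}(ρ), L^{C²R}_{Σ₁, Σ₂}(t₀, T)) < C·R. -/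

import Mathlib

/-
A near-loop between the flow-outs is a point `φ_t x` with `x ∈ Σ₁`, a perturbation `q` of it and
a time `u` with `φ_u q` near `φ_s y`, `y ∈ Σ₂`. Applying `φ_{-t}` to the base point and `φ_{-s}` to
the endpoint turns it into a near-loop between `Σ₁` and `Σ₂` of duration `u + t - s`, which lies in
`[t₀, T]` because `|t - s| ≤ |t| + |s|`; each flow map stretches distances by at most `C`.
-/

/-- The near-looping set `L^r_{A,B}(a, b)`: points of `A` from which an
`r`-perturbed trajectory reaches the `r`-neighborhood of `B` at some time `u`
with `a ≤ |u| ≤ b`. -/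
def loopSet {X : Type*} [MetricSpace X] (φ : ℝ → X → X)
    (A B : Set X) (r a b : ℝ) : Set X :=
  {ρ | ρ ∈ A ∧ ∃ q ∈ Metric.ball ρ r, ∃ u : ℝ, a ≤ |u| ∧ |u| ≤ b ∧
    φ u q ∈ Metric.thickening r B}

open Set Metric Function

theorem LipschitzWith.mapsTo_thickening {α β : Type*} [PseudoMetricSpace α]
    [PseudoMetricSpace β] {K : NNReal} {f : α → β} (hf : LipschitzWith K f) (hK : K ≠ 0)
    (E : Set α) (r : ℝ) : MapsTo f (thickening r E) (thickening (K * r) (f '' E)) := by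
  intro x hx
  obtain ⟨y, hyE, hxy⟩ := mem_thickening_iff.1 hx
  exact mem_thickening_iff.2 ⟨f y, mem_image_of_mem f hyE, hf.mapsTo_ball hK y r hxy⟩

theorem le_abs_add_and_abs_add_le {a b c u v : ℝ} (hau : a + c ≤ |u|) (hub : |u| ≤ b - c)
    (hv : |v| ≤ c) : a ≤ |u + v| ∧ |u + v| ≤ b := by
  constructor
  · linarith [abs_sub_abs_le_abs_add u v]
  · linarith [abs_add_le u v]

theorem loopSet_mono_radius {X : Type*} [MetricSpace X] (φ : ℝ → X → X) (A B : Set X)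
    {r r' : ℝ} (hr : r ≤ r') (a b : ℝ) : loopSet φ A B r a b ⊆ loopSet φ A B r' a b := by
  rintro ρ ⟨hρA, q, hq, u, hau, hub, hqB⟩
  exact ⟨hρA, q, ball_subset_ball hr hq, u, hau, hub, thickening_mono hr B hqB⟩

section Flow

variable {X : Type*} {φ : ℝ → X → X}

theorem flow_leftInverse_neg (hφ0 : φ 0 = id) (hφadd : ∀ a b : ℝ, φ (a + b) = φ a ∘ φ b)
    (a : ℝ) : LeftInverse (φ (-a)) (φ a) := fun x => by
  rw [← comp_apply (f := φ (-a)), ← hφadd, neg_add_cancel, hφ0, id]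

theorem flow_mapsTo_loopSet_flowout [MetricSpace X] (hφ0 : φ 0 = id)
    (hφadd : ∀ a b : ℝ, φ (a + b) = φ a ∘ φ b) {t s : ℝ} {K : NNReal} (hK : K ≠ 0)
    (ht : LipschitzWith K (φ (-t))) (hs : LipschitzWith K (φ (-s))) (S₁ S₂ : Set X)
    (r a b : ℝ) :
    MapsTo (φ (-t)) (loopSet φ (φ t '' S₁) (φ s '' S₂) r (a + |t| + |s|) (b - |t| - |s|))
      (loopSet φ S₁ S₂ (K * r) a b) := by
  rintro _ ⟨⟨x, hx, rfl⟩, q, hq, u, hau, hub, hqB⟩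
  have hwindow := le_abs_add_and_abs_add_le (a := a) (b := b) (u := u) (by linarith) (by linarith)
    (abs_sub t s)
  have hendpoint : φ (u + (t - s)) (φ (-t) q) = φ (-s) (φ u q) := by
    rw [← comp_apply (f := φ _), ← hφadd, ← comp_apply (f := φ (-s)), ← hφadd]
    congr 1
    ring
  have hbase : φ (-t) (φ t x) = x := flow_leftInverse_neg hφ0 hφadd t x
  rw [hbase]
  refine ⟨hx, φ (-t) q, ?_, u + (t - s), hwindow.1, hwindow.2, ?_⟩
  · exact hbase ▸ ht.mapsTo_ball hK _ r hq
  · rw [hendpoint, ← (flow_leftInverse_neg hφ0 hφadd s).image_image S₂]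
    exact hs.mapsTo_thickening hK _ r hqB

end Flow

theorem flowout_nonlooping_pullback_general {X : Type*} [MetricSpace X]
    (φ : ℝ → X → X) (hφ0 : φ 0 = id)
    (hφadd : ∀ a b : ℝ, φ (a + b) = φ a ∘ φ b)
    (t s C : ℝ) (hC : 1 ≤ C)
    (hLip : ∀ r : ℝ, |r| ≤ |t| + |s| → LipschitzWith (Real.toNNReal C) (φ r))
    (S₁ S₂ : Set X) (t₀ T R : ℝ) (hR : 0 < R)
    (ρ : X) (hρ : ρ ∈ φ t '' S₁)
    (hnear : ρ ∈ Metric.thickening R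
      (loopSet φ (φ t '' S₁) (φ s '' S₂) R (t₀ + |t| + |s|) (T - |t| - |s|))) :
    φ (-t) ρ ∈ S₁ ∧
      φ (-t) ρ ∈ Metric.thickening (C * R) (loopSet φ S₁ S₂ (C ^ 2 * R) t₀ T) := by
  have hK : C.toNNReal ≠ 0 := by simp only [ne_eq, Real.toNNReal_eq_zero]; linarith
  have hKC : (C.toNNReal : ℝ) = C := Real.coe_toNNReal C (by linarith)
  have ht := hLip (-t) (by rw [abs_neg]; linarith [abs_nonneg s])
  have hs := hLip (-s) (by rw [abs_neg]; linarith [abs_nonneg t])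
  obtain ⟨x, hx, rfl⟩ := hρ
  refine ⟨by rwa [flow_leftInverse_neg hφ0 hφadd t x], ?_⟩
  have hpulled := ht.mapsTo_thickening hK _ R hnear
  rw [hKC] at hpulled
  refine thickening_subset_of_subset _ (image_subset_iff.2 fun y hy => ?_) hpulled
  have hy' := flow_mapsTo_loopSet_flowout hφ0 hφadd hK ht hs S₁ S₂ R t₀ T hy
  rw [hKC] at hy'
  exact loopSet_mono_radius φ S₁ S₂ (by nlinarith [mul_le_mul_of_nonneg_left hC hR.le]) t₀ T hy'

/-- Non-looping of a pair is inherited by flow-outs: if `ρ ∈ φ_t(S₁)` is within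
`R` of the near-looping set between the flow-outs `φ_t(S₁)`, `φ_s(S₂)` in the
shrunken time window, then `φ_{-t}(ρ) ∈ S₁` lies within `C·R` of the
near-looping set between `S₁` and `S₂` at scale `C²R` in the window `[t₀, T]`. -/
theorem flowout_nonlooping_pullback {X : Type*} [MetricSpace X]
    (φ : ℝ → X → X) (hφ0 : φ 0 = id)
    (hφadd : ∀ a b : ℝ, φ (a + b) = φ a ∘ φ b)
    (t s C : ℝ) (hC : 1 ≤ C)
    (hLip : ∀ r : ℝ, |r| ≤ |t| + |s| → LipschitzWith (Real.toNNReal C) (φ r))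
    (S₁ S₂ : Set X) (t₀ T R : ℝ) (ht₀ : 0 < t₀) (hR : 0 < R)
    (hT : t₀ + |t| + |s| < T)
    (ρ : X) (hρ : ρ ∈ φ t '' S₁)
    (hnear : ρ ∈ Metric.thickening R
      (loopSet φ (φ t '' S₁) (φ s '' S₂) R (t₀ + |t| + |s|) (T - |t| - |s|))) :
    φ (-t) ρ ∈ S₁ ∧
      φ (-t) ρ ∈ Metric.thickening (C * R) (loopSet φ S₁ S₂ (C ^ 2 * R) t₀ T) :=
  flowout_nonlooping_pullback_general φ hφ0 hφadd t s C hC hLip S₁ S₂ t₀ T R hR ρ hρ hnear
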